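/- The orthogonal complement of Range(Γ) in H_n, where Γ(Φ) = ∫ G Φ G*, consists exactly of the Hermitian matrices X such that G(e^{jθ})* X G(e^{jθ}) = 0 for all θ ∈ [0,2π]. -/

import Mathlib

open Matrix MeasureTheory Real Filter
open scoped ComplexOrder

noncomputable section

abbrev Mat (n : ℕ) := Matrix (Fin n) (Fin n) ℂ
abbrev Vec (n : ℕ) := Matrix (Fin n) (Fin 1) ℂ

/-- the point e^{jθ} on the unit circle -/
def circPt (θ : ℝ) : ℂ := Complex.exp (θ * Complex.I)

/-- G(e^{jθ}) = (e^{jθ} I - A)⁻¹ B -/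
def Gm {n : ℕ} (A : Mat n) (B : Vec n) (θ : ℝ) : Vec n :=
  (circPt θ • (1 : Mat n) - A)⁻¹ * B

/-- the scalar G* Λ G at e^{jθ} -/
def quad {n : ℕ} (A : Mat n) (B : Vec n) (Λ : Mat n) (θ : ℝ) : ℂ :=
  ((Gm A B θ)ᴴ * Λ * Gm A B θ) 0 0

/-- normalized entrywise matrix integral over the unit circle -/
def mInt {n : ℕ} (f : ℝ → Mat n) : Mat n :=
  Matrix.of fun i j => (1 / (2 * π) : ℝ) • ∫ θ in (0:ℝ)..(2 * π), f θ i j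

/-- normalized scalar (complex) integral over the unit circle -/
def sInt (f : ℝ → ℂ) : ℂ := (1 / (2 * π) : ℝ) • ∫ θ in (0:ℝ)..(2 * π), f θ

/-- normalized scalar (real) integral over the unit circle -/
def sIntR (f : ℝ → ℝ) : ℝ := (1 / (2 * π)) * ∫ θ in (0:ℝ)..(2 * π), f θ

/-- all eigenvalues of A lie in the open unit disc -/
def IsStable {n : ℕ} (A : Mat n) : Prop := ∀ μ ∈ spectrum ℂ A, ‖μ‖ < 1

/-- (A,B) is a reachable pair: the controllability matrix has full rank -/
def Reachable {n : ℕ} (A : Mat n) (B : Vec n) : Prop :=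
  (Matrix.of fun (i : Fin n) (k : Fin n) => (A ^ (k : ℕ) * B) i 0).rank = n

open scoped Classical in
/-- positive semidefinite square root (junk value 0 off the psd cone) -/
def msqrt {n : ℕ} (M : Mat n) : Mat n :=
  if h : M.PosSemidef then
    h.1.eigenvectorUnitary.1 * diagonal ((↑) ∘ (√·) ∘ h.1.eigenvalues) *
      (star h.1.eigenvectorUnitary : Mat n)
  else 0

/-- the moment map ∫ G (Ψ/(G*ΛG)) G* -/
def moment {n : ℕ} (A : Mat n) (B : Vec n) (Ψ : ℝ → ℝ) (Λ : Mat n) : Mat n :=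
  mInt (fun θ => ((Ψ θ : ℂ) / quad A B Λ θ) • (Gm A B θ * (Gm A B θ)ᴴ))

/-- the iteration map Θ(Λ) = ∫ Λ^{1/2} G (Ψ/(G*ΛG)) G* Λ^{1/2} -/
def Theta {n : ℕ} (A : Mat n) (B : Vec n) (Ψ : ℝ → ℝ) (Λ : Mat n) : Mat n :=
  mInt (fun θ => ((Ψ θ : ℂ) / quad A B Λ θ) •
    (msqrt Λ * (Gm A B θ * (Gm A B θ)ᴴ) * msqrt Λ))

/-- the linearization M of Θ at Λ:
M(X) = X - Λ^{1/2} ∫ (GΨG*/(G*ΛG)) (G*XG/(G*ΛG)) Λ^{1/2} -/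
def Mlin {n : ℕ} (A : Mat n) (B : Vec n) (Ψ : ℝ → ℝ) (Λ : Mat n) (X : Mat n) : Mat n :=
  X - msqrt Λ * mInt (fun θ =>
    (((Ψ θ : ℂ) * (((Gm A B θ)ᴴ * X * Gm A B θ) 0 0)) / (quad A B Λ θ) ^ 2) •
      (Gm A B θ * (Gm A B θ)ᴴ)) * msqrt Λ

/-- the range of the operator Γ : Φ ↦ ∫ G Φ G* on continuous (2π-periodic) functions -/
def RangeGamma {n : ℕ} (A : Mat n) (B : Vec n) : Set (Mat n) :=
  {M | ∃ Φ : ℝ → ℝ, Continuous Φ ∧ (∀ θ, Φ (θ + 2 * π) = Φ θ) ∧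
    M = mInt (fun θ => (Φ θ : ℂ) • (Gm A B θ * (Gm A B θ)ᴴ))}

/-! The integrand of `Γ Φ` is `Φ • G G*`, so `tr (X Γ Φ)` is the mean of `Φ · G* X G` over the
circle. If `G* X G` vanishes this is zero for every `Φ`. Conversely, for Hermitian `X` the function
`G* X G` is real, continuous and `2π`-periodic, so it is itself an admissible `Φ`; orthogonality
then says that the mean of its square vanishes, which forces it to be zero. -/

lemma continuous_circPt : Continuous circPt := by
  unfold circPt; fun_prop

lemma norm_circPt (θ : ℝ) : ‖circPt θ‖ = 1 := by
  simp [circPt, Complex.norm_exp_ofReal_mul_I]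

lemma circPt_periodic : Function.Periodic circPt (2 * π) := by
  intro θ
  simp only [circPt, Complex.ofReal_add, Complex.ofReal_mul, add_mul, Complex.exp_add]
  push_cast
  rw [Complex.exp_two_pi_mul_I, mul_one]

lemma IsStable.isUnit_det_circPt_smul_one_sub {n : ℕ} {A : Mat n} (hA : IsStable A) (θ : ℝ) :
    IsUnit (circPt θ • (1 : Mat n) - A).det := by
  rw [← Matrix.isUnit_iff_isUnit_det]
  by_contra h
  have hmem : circPt θ ∈ spectrum ℂ A := by
    rwa [spectrum.mem_iff, Algebra.algebraMap_eq_smul_one]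
  simpa [norm_circPt] using hA _ hmem

lemma IsStable.continuous_Gm {n : ℕ} {A : Mat n} (hA : IsStable A) (B : Vec n) :
    Continuous (Gm A B) := by
  have hcont : Continuous fun θ => circPt θ • (1 : Mat n) - A :=
    (continuous_circPt.smul continuous_const).sub continuous_const
  have hinv : Continuous fun θ => (circPt θ • (1 : Mat n) - A)⁻¹ := by
    simp only [Matrix.inv_def, Ring.inverse_eq_inv']
    exact (hcont.matrix_det.inv₀ fun θ => (hA.isUnit_det_circPt_smul_one_sub θ).ne_zero).smul
      hcont.matrix_adjugate
  exact hinv.matrix_mul continuous_const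

lemma Gm_periodic {n : ℕ} (A : Mat n) (B : Vec n) : Function.Periodic (Gm A B) (2 * π) := by
  intro θ
  simp only [Gm, circPt_periodic θ]

lemma IsStable.continuous_quad {n : ℕ} {A : Mat n} (hA : IsStable A) (B : Vec n) (X : Mat n) :
    Continuous (quad A B X) := by
  have hG := hA.continuous_Gm B
  exact ((hG.matrix_conjTranspose.matrix_mul continuous_const).matrix_mul hG).matrix_elem 0 0

lemma quad_periodic {n : ℕ} (A : Mat n) (B : Vec n) (X : Mat n) :
    Function.Periodic (quad A B X) (2 * π) := by
  intro θ
  simp only [quad, Gm_periodic A B θ]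

lemma ofReal_re_quad {n : ℕ} (A : Mat n) (B : Vec n) {X : Mat n} (hX : X.IsHermitian) (θ : ℝ) :
    ((quad A B X θ).re : ℂ) = quad A B X θ :=
  Complex.conj_eq_iff_re.mp ((isHermitian_conjTranspose_mul_mul (Gm A B θ) hX).apply 0 0)

lemma conjTranspose_Gm_mul_mul_Gm_eq_zero_iff {n : ℕ} (A : Mat n) (B : Vec n) (X : Mat n)
    (θ : ℝ) : (Gm A B θ)ᴴ * X * Gm A B θ = 0 ↔ quad A B X θ = 0 := by
  simp [← Matrix.ext_iff, Fin.forall_fin_one, quad]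

lemma trace_mul_mInt {n : ℕ} (X : Mat n) {f : ℝ → Mat n}
    (hf : ∀ i j, IntervalIntegrable (fun θ => f θ i j) volume 0 (2 * π)) :
    (X * mInt f).trace = (1 / (2 * π) : ℝ) • ∫ θ in (0:ℝ)..(2 * π), (X * f θ).trace := by
  have hint : ∀ i j, IntervalIntegrable (fun θ => X i j * f θ j i) volume 0 (2 * π) :=
    fun i j => (hf j i).const_mul _
  have hsum : ∀ i, IntervalIntegrable (fun θ => ∑ j, X i j * f θ j i) volume 0 (2 * π) :=
    fun i => by
      simpa only [Finset.sum_fn] using IntervalIntegrable.sum _ fun j _ => hint i j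
  simp only [Matrix.trace, Matrix.diag, Matrix.mul_apply, mInt, Matrix.of_apply,
    intervalIntegral.integral_finsetSum fun i _ => hsum i,
    intervalIntegral.integral_finsetSum fun j _ => hint _ j, Finset.smul_sum,
    intervalIntegral.integral_const_mul, mul_smul_comm]

lemma trace_mul_smul_mul_conjTranspose {n : ℕ} (X : Mat n) (G : Vec n) (c : ℂ) :
    (X * (c • (G * Gᴴ))).trace = c * (Gᴴ * X * G) 0 0 := by
  rw [Matrix.mul_smul, Matrix.trace_smul, smul_eq_mul, ← Matrix.mul_assoc,
    Matrix.trace_mul_cycle]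
  simp [Matrix.trace, Matrix.mul_assoc]

lemma IsStable.trace_mul_mInt_smul_Gm {n : ℕ} {A : Mat n} (hA : IsStable A) (B : Vec n)
    (X : Mat n) {Φ : ℝ → ℝ} (hΦ : Continuous Φ) :
    (X * mInt (fun θ => (Φ θ : ℂ) • (Gm A B θ * (Gm A B θ)ᴴ))).trace =
      (1 / (2 * π) : ℝ) • ∫ θ in (0:ℝ)..(2 * π), (Φ θ : ℂ) * quad A B X θ := by
  have hG := hA.continuous_Gm B
  have hcont : Continuous fun θ => (Φ θ : ℂ) • (Gm A B θ * (Gm A B θ)ᴴ) :=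
    (Complex.continuous_ofReal.comp hΦ).smul (hG.matrix_mul hG.matrix_conjTranspose)
  rw [trace_mul_mInt X fun i j => (hcont.matrix_elem i j).intervalIntegrable _ _]
  simp only [trace_mul_smul_mul_conjTranspose, quad]

lemma Function.Periodic.eq_zero_of_intervalIntegral_sq_eq_zero {Φ : ℝ → ℝ} {T : ℝ}
    (hT : 0 < T) (hper : Function.Periodic Φ T) (hΦ : Continuous Φ)
    (h : ∫ θ in (0:ℝ)..T, Φ θ ^ 2 = 0) : Φ = 0 := by
  funext θ
  obtain ⟨c, hc, hcθ⟩ := hper.exists_mem_Ico₀ hT θ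
  by_contra hne
  have hpos : 0 < ∫ θ in (0:ℝ)..T, Φ θ ^ 2 :=
    intervalIntegral.integral_pos hT (hΦ.pow 2).continuousOn (fun _ _ => sq_nonneg _)
      ⟨c, Set.Ico_subset_Icc_self hc, pow_two_pos_of_ne_zero (hcθ ▸ hne)⟩
  exact hpos.ne' h

theorem stmt5_general {n : ℕ} (A : Mat n) (B : Vec n) (hA : IsStable A) :
    ∀ X : Mat n, X.IsHermitian →
      ((∀ M ∈ RangeGamma A B, (X * M).trace = 0) ↔
        ∀ θ : ℝ, (Gm A B θ)ᴴ * X * Gm A B θ = 0) := by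
  intro X hX
  simp only [conjTranspose_Gm_mul_mul_Gm_eq_zero_iff]
  constructor
  · intro horth
    set Φ : ℝ → ℝ := fun θ => (quad A B X θ).re
    have hΦ : Continuous Φ := Complex.continuous_re.comp (hA.continuous_quad B X)
    have hper : Function.Periodic Φ (2 * π) := fun θ =>
      congrArg Complex.re (quad_periodic A B X θ)
    have hquad : ∀ θ, quad A B X θ = Φ θ := fun θ => (ofReal_re_quad A B hX θ).symm
    have hsq : ∫ θ in (0:ℝ)..(2 * π), Φ θ ^ 2 = 0 := by
      have h := horth _ ⟨Φ, hΦ, hper, rfl⟩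
      rw [hA.trace_mul_mInt_smul_Gm B X hΦ] at h
      simp only [hquad, ← sq, ← Complex.ofReal_pow, intervalIntegral.integral_ofReal,
        Complex.real_smul, Complex.ofReal_eq_zero, mul_eq_zero] at h
      exact h.resolve_left (by positivity)
    intro θ
    rw [hquad, hper.eq_zero_of_intervalIntegral_sq_eq_zero two_pi_pos hΦ hsq, Pi.zero_apply,
      Complex.ofReal_zero]
  · rintro hzero M ⟨Φ, hΦ, -, rfl⟩
    rw [hA.trace_mul_mInt_smul_Gm B X hΦ]
    simp [hzero]

/-- (Range Γ)^⊥ = {X Hermitian : G* X G ≡ 0 on the circle}. -/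
theorem stmt5 {n : ℕ} (A : Mat n) (B : Vec n)
    (hA : IsStable A) (hR : Reachable A B) :
    ∀ X : Mat n, X.IsHermitian →
      ((∀ M ∈ RangeGamma A B, (X * M).trace = 0) ↔
        ∀ θ : ℝ, (Gm A B θ)ᴴ * X * Gm A B θ = 0) :=
  stmt5_general A B hA
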